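/- arXiv:1509.06646 — 3 statements merged into one kernel-verified Lean document; each statement's English description precedes it below -/
import Mathlib

section
/- Let σ be a permutation of Fin n with permutation matrix P and let A be an n×n matrix over a commutative ring R. Then the leading coefficient of det(A + u • P), i.e., the coefficient of u^n, equals the sign of σ. -/
open Polynomial

theorem leading_coeff_eq_sign (R : Type*) [CommRing R] (n : ℕ)
    (σ : Equiv.Perm (Fin n)) (A : Matrix (Fin n) (Fin n) R) :
    ((A.map (Polynomial.C) + (Polynomial.X : R[X]) • (σ.permMatrix R).map Polynomial.C).det).coeff n
      = ((Equiv.Perm.sign σ : ℤ) : R) := by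
  have h := coeff_det_X_add_C_card (σ.permMatrix R) A
  rw [Fintype.card_fin, Matrix.det_permutation, add_comm] at h
  exact h
end

section
/- For an n×n matrix M over a commutative ring, the coefficient of u^{n-k} in det(u • I_n + M) equals the sum, over all k-element subsets α of Fin n, of the principal minors det(M[α; α]). -/
open Polynomial

namespace Matrix

variable {R n : Type*} [CommRing R] [Fintype n] [DecidableEq n]

theorem det_X_smul_one_add_eq_charpoly_neg (M : Matrix n n R) :
    ((X : R[X]) • (1 : Matrix n n R[X]) + M.map C).det = (-M).charpoly := by
  rw [charpoly, charmatrix, RingHom.map_neg, sub_neg_eq_add, scalar_apply, smul_one_eq_diagonal,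
    RingHom.mapMatrix_apply]

theorem coeff_det_X_smul_one_add_eq_sum_minors (M : Matrix n n R) {k : ℕ}
    (hk : k ≤ Fintype.card n) :
    ((X : R[X]) • (1 : Matrix n n R[X]) + M.map C).det.coeff (Fintype.card n - k) =
      ∑ s ∈ Finset.univ.powersetCard k, (M.submatrix (Subtype.val : s → n) Subtype.val).det := by
  rw [det_X_smul_one_add_eq_charpoly_neg, charpoly_coeff_eq_sum_minors _ k hk, Finset.mul_sum]
  refine Finset.sum_congr rfl fun s hs => ?_
  rw [submatrix_neg, Pi.neg_apply, Pi.neg_apply, det_neg, Fintype.card_coe,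
    (Finset.mem_powersetCard.mp hs).2, ← mul_assoc, ← mul_pow, neg_one_mul, neg_neg, one_pow,
    one_mul]

end Matrix

theorem coeff_det_X_smul_one_add (R : Type*) [CommRing R] (n : ℕ)
    (M : Matrix (Fin n) (Fin n) R) (k : ℕ) (hk : k ≤ n) :
    (((Polynomial.X : R[X]) • (1 : Matrix (Fin n) (Fin n) R[X]) + M.map Polynomial.C).det).coeff (n - k)
      = ∑ s ∈ Finset.powersetCard k (Finset.univ : Finset (Fin n)),
          (M.submatrix (fun i : s => (i : Fin n)) (fun j : s => (j : Fin n))).det := by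
  simpa using M.coeff_det_X_smul_one_add_eq_sum_minors (k := k) (by simpa using hk)
end

section
/- Let τ be the fixed-point-free involution on Fin m ⊕ Fin m swapping the two copies, with permutation matrix J, and suppose a matrix T over a commutative ring satisfies Tᵀ = J * T * J. Then for every k, the sum over all k-element subsets α of the minors det(T[α; τ(α)]) (rows α, columns the τ-image of α, in corresponding order) is invariant under replacing T by Tᵀ. -/
/-!
Write `P` for the permutation matrix of `τ` and `B := T P⁻¹`, so that `T[α; τ(α)]` is the principal
submatrix `B[α; α]`. The hypothesis `Tᵀ = P T P` gives `Tᵀ P⁻¹ = P B P⁻¹`: the semi-principal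
minors of `Tᵀ` are the principal minors of a simultaneous permutation of `B`, and relabelling the
subsets `α ↦ τ(α)` matches them with those of `B`.
-/

open Finset

namespace Matrix

variable {ι R : Type*} [DecidableEq ι]

theorem permMatrix_mul_mul_permMatrix [Fintype ι] [Semiring R] (σ ρ : Equiv.Perm ι)
    (A : Matrix ι ι R) :
    σ.permMatrix R * A * ρ.permMatrix R = A.submatrix σ ρ.symm := by
  rw [Equiv.Perm.permMatrix, Equiv.Perm.permMatrix, PEquiv.toMatrix_toPEquiv_mul,
    PEquiv.mul_toMatrix_toPEquiv]
  ext i j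
  simp

variable [CommRing R]

def principalMinor (B : Matrix ι ι R) (s : Finset ι) : R :=
  (B.submatrix (fun i : s => (i : ι)) (fun i : s => (i : ι))).det

theorem principalMinor_map {κ : Type*} [DecidableEq κ] (B : Matrix ι ι R) (f : κ ↪ ι)
    (s : Finset κ) :
    B.principalMinor (s.map f) = (B.submatrix (fun i : s => f i) (fun i : s => f i)).det :=
  (det_submatrix_equiv_self (equivMap f s) _).symm

theorem sum_principalMinor_submatrix_perm [Fintype ι] (B : Matrix ι ι R) (σ : Equiv.Perm ι)
    (k : ℕ) :
    ∑ s ∈ powersetCard k univ, (B.submatrix σ σ).principalMinor s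
      = ∑ s ∈ powersetCard k univ, B.principalMinor s := by
  refine sum_equiv σ.finsetCongr (fun s => by simp) (fun s _ => ?_)
  rw [Equiv.finsetCongr_apply, principalMinor_map]
  rfl

end Matrix

theorem semi_principal_minors_transpose_invariant (R : Type*) [CommRing R] (m : ℕ)
    (T : Matrix (Fin m ⊕ Fin m) (Fin m ⊕ Fin m) R)
    (hT : T.transpose
      = Equiv.Perm.permMatrix R (Equiv.sumComm (Fin m) (Fin m)) * T
          * Equiv.Perm.permMatrix R (Equiv.sumComm (Fin m) (Fin m))) :
    ∀ k : ℕ,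
    ∑ s ∈ Finset.powersetCard k (Finset.univ : Finset (Fin m ⊕ Fin m)),
        (T.submatrix (fun i : s => (i : Fin m ⊕ Fin m))
          (fun i : s => Equiv.sumComm (Fin m) (Fin m) (i : Fin m ⊕ Fin m))).det
      = ∑ s ∈ Finset.powersetCard k (Finset.univ : Finset (Fin m ⊕ Fin m)),
        (T.transpose.submatrix (fun i : s => (i : Fin m ⊕ Fin m))
          (fun i : s => Equiv.sumComm (Fin m) (Fin m) (i : Fin m ⊕ Fin m))).det := by
  intro k
  set τ := Equiv.sumComm (Fin m) (Fin m)
  have hTτ : T.transpose.submatrix id τ = (T.submatrix id τ).submatrix τ τ := by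
    ext i j
    simp [hT, Matrix.permMatrix_mul_mul_permMatrix, τ]
  change ∑ s ∈ _, (T.submatrix id τ).principalMinor s
    = ∑ s ∈ _, (T.transpose.submatrix id τ).principalMinor s
  rw [hTτ, Matrix.sum_principalMinor_submatrix_perm]
end
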